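/- Let α ∈ (0,1) and θ > −α be real, let V(n,k) := (θ+α)_{k−1↑α}/(θ+1)_{n−1↑} be the two-parameter Poisson–Dirichlet Gibbs weights, let n ≥ k ≥ 1 be integers, and let 0 ≤ s ≤ m. Then (1/V(n,k)) · binom(m,s) · (n − kα)_{m−s↑} · ∑_{k*=0}^{s} V(n+m, k+k*) · S_{s,k*}^{-1,-α} = binom(m,s) · (n − kα)_{m−s↑} · (θ + kα)_{s↑} / (θ + n)_{m↑}. -/

import Mathlib

/-- Generalized rising factorial `(x)_{n↑h} = ∏_{i=0}^{n-1} (x + i·h)`. -/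
noncomputable def risefac (x h : ℝ) (n : ℕ) : ℝ := ∏ i ∈ Finset.range n, (x + i * h)

/-- Generalized Stirling number `S_{n,k}^{-1,-α} = (n!/k!) ∑ ∏_j (1-α)_{n_j-1↑}/n_j!`,
the sum over positive tuples `(n_1,…,n_k)` with sum `n`. -/
noncomputable def genStirling (α : ℝ) (n k : ℕ) : ℝ :=
  ((n.factorial : ℝ) / k.factorial) *
    ∑ f ∈ (Finset.Nat.antidiagonalTuple k n).filter (fun f => ∀ i, 0 < f i),
      ∏ j, risefac (1 - α) 1 (f j - 1) / (f j).factorial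

/-- The two-parameter Poisson–Dirichlet Gibbs weights
`V(n,k) = (θ+α)_{k−1↑α} / (θ+1)_{n−1↑}`. -/
noncomputable def pdV (α θ : ℝ) (n k : ℕ) : ℝ :=
  risefac (θ + α) α (k - 1) / risefac (θ + 1) 1 (n - 1)

/-!
Let `W(t) = ∑_{j ≥ 1} (1-α)_{j-1↑} t^j / j!`, so that `W = (1 - (1 - t)^α) / α`; the positivity of
the parts in `genStirling` becomes `W(0) = 0`, and `S_{n,k}^{-1,-α}` is `n!/k!` times the
`t^n`-coefficient of `W^k`. The differential equation `(1 - t) W' = 1 - α W` yields the triangular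
recurrence `S_{n+1,k+1} = S_{n,k} + (n - (k+1)α) S_{n,k+1}`, hence the change of basis
`∑_k S_{n,k} (x)_{k↑α} = (x)_{n↑}`. Since the Gibbs weights factor as
`V(n+m, k+j) = V(n,k) (θ+kα)_{j↑α} / (θ+n)_{m↑}`, the sum over `k*` collapses to
`V(n,k) (θ+kα)_{s↑} / (θ+n)_{m↑}`.
-/

open PowerSeries Finset

lemma risefac_succ (x h : ℝ) (n : ℕ) :
    risefac x h (n + 1) = risefac x h n * (x + n * h) :=
  prod_range_succ _ _

lemma risefac_add (x h : ℝ) (a b : ℕ) :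
    risefac x h (a + b) = risefac x h a * risefac (x + a * h) h b := by
  simp only [risefac, prod_range_add, Nat.cast_add, add_mul, add_assoc]

lemma risefac_pos {x h : ℝ} (hx : 0 < x) (hh : 0 ≤ h) (n : ℕ) : 0 < risefac x h n :=
  prod_pos fun i _ => by positivity

lemma PowerSeries.coeff_pow_eq_sum_antidiagonalTuple {R : Type*} [CommSemiring R]
    (φ : R⟦X⟧) (k n : ℕ) :
    coeff n (φ ^ k) = ∑ f ∈ Nat.antidiagonalTuple k n, ∏ j, coeff (f j) φ := by
  rw [← Fin.prod_const, coeff_prod]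
  refine sum_nbij' (⇑) Finsupp.equivFunOnFinite.symm ?_ ?_ ?_ ?_ ?_ <;>
    simp [Nat.mem_antidiagonalTuple]

lemma PowerSeries.coeff_X_mul_derivative {R : Type*} [CommSemiring R] (f : R⟦X⟧) (n : ℕ) :
    coeff n (X * d⁄dX R f) = n * coeff n f := by
  cases n with
  | zero => simp
  | succ n => rw [coeff_succ_X_mul, coeff_derivative, mul_comm]; push_cast; rfl

noncomputable def blockEGF (α : ℝ) : ℝ⟦X⟧ :=
  mk fun j => if j = 0 then 0 else risefac (1 - α) 1 (j - 1) / j.factorial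

lemma genStirling_eq_coeff_blockEGF_pow (α : ℝ) (n k : ℕ) :
    genStirling α n k = (n.factorial / k.factorial : ℝ) * coeff n (blockEGF α ^ k) := by
  rw [genStirling, coeff_pow_eq_sum_antidiagonalTuple, sum_filter]
  congr 1
  refine sum_congr rfl fun f _ => ?_
  split_ifs with hf
  · exact prod_congr rfl fun j _ => by simp [blockEGF, (hf j).ne']
  · obtain ⟨j, hj⟩ := not_forall.mp hf
    exact (prod_eq_zero (mem_univ j) (by simp [blockEGF, Nat.eq_zero_of_not_pos hj])).symm

lemma coeff_blockEGF_succ_succ (α : ℝ) (j : ℕ) :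
    (j + 2 : ℝ) * coeff (j + 2) (blockEGF α) = (j + 1 - α) * coeff (j + 1) (blockEGF α) := by
  simp only [blockEGF, coeff_mk, Nat.add_eq_zero_iff, one_ne_zero, OfNat.ofNat_ne_zero,
    and_false, if_false, Nat.add_sub_cancel, show j + 2 - 1 = j + 1 by omega, risefac_succ,
    Nat.factorial_succ (j + 1)]
  push_cast
  field_simp
  ring

lemma derivative_blockEGF (α : ℝ) :
    d⁄dX ℝ (blockEGF α) = 1 - C α * blockEGF α + X * d⁄dX ℝ (blockEGF α) := by
  ext n
  rw [map_add, map_sub, coeff_X_mul_derivative, coeff_derivative, coeff_C_mul, coeff_one]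
  rcases n with _ | j
  · simp [blockEGF, risefac]
  · have := coeff_blockEGF_succ_succ α j
    push_cast
    linear_combination this

lemma coeff_blockEGF_pow_succ_succ (α : ℝ) (n k : ℕ) :
    (n + 1 : ℝ) * coeff (n + 1) (blockEGF α ^ (k + 1))
      = n * coeff n (blockEGF α ^ (k + 1))
        + (k + 1) * (coeff n (blockEGF α ^ k) - α * coeff n (blockEGF α ^ (k + 1))) := by
  set W := blockEGF α
  have hode : d⁄dX ℝ (W ^ (k + 1))
      = C (k + 1 : ℝ) * (W ^ k - C α * W ^ (k + 1)) + X * d⁄dX ℝ (W ^ (k + 1)) := by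
    rw [derivative_pow, Nat.add_sub_cancel, ← map_natCast C]
    push_cast
    linear_combination (C (k + 1 : ℝ) * W ^ k) * derivative_blockEGF α
  have := congrArg (coeff n) hode
  rw [coeff_derivative, map_add, coeff_X_mul_derivative, coeff_C_mul, map_sub, coeff_C_mul] at this
  linear_combination this

lemma genStirling_succ_succ (α : ℝ) (n k : ℕ) :
    genStirling α (n + 1) (k + 1)
      = genStirling α n k + (n - (k + 1) * α) * genStirling α n (k + 1) := by
  have := coeff_blockEGF_pow_succ_succ α n k
  simp only [genStirling_eq_coeff_blockEGF_pow, Nat.factorial_succ]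
  push_cast
  field_simp
  linear_combination this

lemma genStirling_zero_zero (α : ℝ) : genStirling α 0 0 = 1 := by
  simp [genStirling_eq_coeff_blockEGF_pow]

lemma genStirling_succ_zero (α : ℝ) (n : ℕ) : genStirling α (n + 1) 0 = 0 := by
  simp [genStirling_eq_coeff_blockEGF_pow, coeff_one]

lemma genStirling_eq_zero_of_lt (α : ℝ) {n k : ℕ} (h : n < k) : genStirling α n k = 0 := by
  have hX : (X : ℝ⟦X⟧) ∣ blockEGF α := X_dvd_iff.mpr (by simp [blockEGF])
  rw [genStirling_eq_coeff_blockEGF_pow, X_pow_dvd_iff.mp (pow_dvd_pow_of_dvd hX k) n h, mul_zero]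

theorem sum_genStirling_mul_risefac (α x : ℝ) (n : ℕ) :
    ∑ k ∈ range (n + 1), genStirling α n k * risefac x α k = risefac x 1 n := by
  induction n with
  | zero => simp [genStirling_zero_zero, risefac]
  | succ n ih =>
    set g := fun k : ℕ => (n - k * α) * genStirling α n k * risefac x α k
    have hg : ∑ k ∈ range (n + 1), g (k + 1) = ∑ k ∈ range (n + 1), g k := by
      have hlast : g (n + 1) = 0 := by simp [g, genStirling_eq_zero_of_lt α n.lt_succ_self]
      have hfirst : g 0 = 0 := by cases n <;> simp [g, genStirling_succ_zero]
      have := (sum_range_succ' g (n + 1)).symm.trans (sum_range_succ g (n + 1))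
      rwa [hfirst, hlast, add_zero, add_zero] at this
    calc ∑ k ∈ range (n + 1 + 1), genStirling α (n + 1) k * risefac x α k
        = ∑ k ∈ range (n + 1), (genStirling α n k * risefac x α (k + 1) + g (k + 1)) := by
          rw [sum_range_succ', genStirling_succ_zero, zero_mul, add_zero]
          refine sum_congr rfl fun k _ => ?_
          simp only [g, genStirling_succ_succ]
          push_cast
          ring
      _ = ∑ k ∈ range (n + 1), genStirling α n k * risefac x α k * (x + n) := by
          rw [sum_add_distrib, hg, ← sum_add_distrib]
          refine sum_congr rfl fun k _ => ?_
          simp only [g, risefac_succ]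
          ring
      _ = risefac x 1 (n + 1) := by rw [← sum_mul, ih, risefac_succ, mul_one]

lemma pdV_pos {α θ : ℝ} (hα0 : 0 ≤ α) (hα1 : α ≤ 1) (hθ : -α < θ) (n k : ℕ) :
    0 < pdV α θ n k :=
  div_pos (risefac_pos (by linarith) hα0 _) (risefac_pos (by linarith) zero_le_one _)

lemma pdV_add (α θ : ℝ) {n k : ℕ} (hn : 1 ≤ n) (hk : 1 ≤ k) (m j : ℕ) :
    pdV α θ (n + m) (k + j)
      = pdV α θ n k * risefac (θ + k * α) α j / risefac (θ + n) 1 m := by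
  obtain ⟨n, rfl⟩ := Nat.exists_eq_add_of_le' hn
  obtain ⟨k, rfl⟩ := Nat.exists_eq_add_of_le' hk
  simp only [pdV, show n + 1 + m - 1 = n + m by omega, show k + 1 + j - 1 = k + j by omega,
    Nat.add_sub_cancel, risefac_add]
  rw [show θ + α + k * α = θ + (k + 1 : ℕ) * α by push_cast; ring,
    show θ + 1 + n * 1 = θ + (n + 1 : ℕ) by push_cast; ring]
  ring

lemma sum_pdV_mul_genStirling (α θ : ℝ) {n k : ℕ} (hn : 1 ≤ n) (hk : 1 ≤ k) (m s : ℕ) :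
    ∑ j ∈ range (s + 1), pdV α θ (n + m) (k + j) * genStirling α s j
      = pdV α θ n k * risefac (θ + k * α) 1 s / risefac (θ + n) 1 m := by
  rw [← sum_genStirling_mul_risefac α (θ + k * α) s, mul_sum, sum_div]
  refine sum_congr rfl fun j _ => ?_
  rw [pdV_add α θ hn hk]
  ring

theorem pd_new_observations_dist_general (α θ : ℝ) (hα0 : 0 < α) (hα1 : α < 1) (hθ : -α < θ)
    (n k : ℕ) (hk : 1 ≤ k) (hkn : k ≤ n) (s m : ℕ) :
    (1 / pdV α θ n k) * (m.choose s : ℝ) * risefac ((n : ℝ) - k * α) 1 (m - s) *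
        ∑ kstar ∈ Finset.range (s + 1), pdV α θ (n + m) (k + kstar) * genStirling α s kstar
      = (m.choose s : ℝ) * risefac ((n : ℝ) - k * α) 1 (m - s) *
          risefac (θ + k * α) 1 s / risefac (θ + n) 1 m := by
  have hV : pdV α θ n k ≠ 0 := (pdV_pos hα0.le hα1.le hθ n k).ne'
  rw [sum_pdV_mul_genStirling α θ (hk.trans hkn) hk]
  field_simp

/-- Under the Poisson–Dirichlet weights, the distribution of the number of observations in
new blocks specializes:
`(1/V(n,k)) binom(m,s) (n−kα)_{m−s↑} ∑_{k*=0}^s V(n+m,k+k*) S_{s,k*}^{-1,-α}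
  = binom(m,s) (n−kα)_{m−s↑} (θ+kα)_{s↑} / (θ+n)_{m↑}`. -/
theorem pd_new_observations_dist (α θ : ℝ) (hα0 : 0 < α) (hα1 : α < 1) (hθ : -α < θ)
    (n k : ℕ) (hk : 1 ≤ k) (hkn : k ≤ n) (s m : ℕ) (hsm : s ≤ m) :
    (1 / pdV α θ n k) * (m.choose s : ℝ) * risefac ((n : ℝ) - k * α) 1 (m - s) *
        ∑ kstar ∈ Finset.range (s + 1), pdV α θ (n + m) (k + kstar) * genStirling α s kstar
      = (m.choose s : ℝ) * risefac ((n : ℝ) - k * α) 1 (m - s) *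
          risefac (θ + k * α) 1 s / risefac (θ + n) 1 m :=
  pd_new_observations_dist_general α θ hα0 hα1 hθ n k hk hkn s m
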